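/- Suppose each F_i is strongly convex with modulus μ_i > 0. Let x ∈ ℝⁿ, let d ∈ ℝⁿ with d ≠ 0, let σ ∈ (0,1), and let β ∈ (0,1] satisfy the Armijo condition at β for direction d at x. If the active set A = {i ∈ {1,…,m} : ⟨∇F_i(x), d⟩ = −‖d‖²} is nonempty and μ_max = max{μ_i : i ∈ A}, then β ≤ min{2(1−σ)/μ_max, 1}. -/

import Mathlib

open scoped RealInnerProductSpace

/-- `φ_g(d) = max_{1 ≤ i ≤ m} ⟨g_i, d⟩ + ‖d‖²/2`. -/
noncomputable def phi {n m : ℕ} (g : Fin m → EuclideanSpace ℝ (Fin n))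
    (d : EuclideanSpace ℝ (Fin n)) : ℝ :=
  (⨆ i, ⟪g i, d⟫) + ‖d‖ ^ 2 / 2

/-- The Armijo condition at stepsize `β` for direction `d` at `x`:
`F_i(x + βd) - F_i(x) ≤ σβ⟨∇F_i(x), d⟩` for every `i`. -/
def ArmijoAt {n m : ℕ} (F : Fin m → EuclideanSpace ℝ (Fin n) → ℝ)
    (x d : EuclideanSpace ℝ (Fin n)) (σ β : ℝ) : Prop :=
  ∀ i, F i (x + β • d) - F i x ≤ σ * β * ⟪gradient (F i) x, d⟫

/-- `β` is an Armijo backtracking stepsize: `β ∈ (0,1]`, the Armijo condition holds at `β`,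
and either `β = 1` or the Armijo condition fails (for some index) at `β/γ`. -/
def ArmijoBacktrack {n m : ℕ} (F : Fin m → EuclideanSpace ℝ (Fin n) → ℝ)
    (x d : EuclideanSpace ℝ (Fin n)) (σ γ β : ℝ) : Prop :=
  0 < β ∧ β ≤ 1 ∧ ArmijoAt F x d σ β ∧ (β = 1 ∨ ¬ ArmijoAt F x d σ (β / γ))

/-! Pick an active index `i` with `μ_i = μ_max`. Strong convexity gives
`F_i(x + βd) - F_i(x) ≥ β⟨∇F_i(x), d⟩ + (μ_i/2)β²‖d‖²`; combined with the Armijo condition and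
`⟨∇F_i(x), d⟩ = -‖d‖²`, dividing by `β‖d‖² > 0` leaves `μ_i β / 2 ≤ 1 - σ`. -/

open Set

section FirstOrder

variable {E : Type*} [NormedAddCommGroup E] [InnerProductSpace ℝ E] {f : E → ℝ} {x : E}

theorem ConvexOn.add_fderiv_sub_le {f' : E →L[ℝ] ℝ} (hf : ConvexOn ℝ univ f)
    (hf' : HasFDerivAt f f' x) (y : E) : f x + f' (y - x) ≤ f y := by
  have hline : HasDerivAt (f ∘ AffineMap.lineMap (k := ℝ) x y) (f' (y - x)) 0 := by
    have hf'0 : HasFDerivAt f f' (AffineMap.lineMap x y (0 : ℝ)) := by simpa using hf'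
    exact hf'0.comp_hasDerivAt 0 AffineMap.hasDerivAt_lineMap
  have hslope := (hf.comp_affineMap (AffineMap.lineMap x y)).le_slope_of_hasDerivAt
    (mem_univ 0) (mem_univ 1) zero_lt_one hline
  simp only [slope_def_field, Function.comp_apply, AffineMap.lineMap_apply_zero,
    AffineMap.lineMap_apply_one, sub_zero, div_one] at hslope
  linarith

theorem StrongConvexOn.add_fderiv_sub_add_le {f' : E →L[ℝ] ℝ} {μ : ℝ}
    (hf : StrongConvexOn univ μ f) (hf' : HasFDerivAt f f' x) (y : E) :
    f x + f' (y - x) + μ / 2 * ‖y - x‖ ^ 2 ≤ f y := by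
  have hsq : HasFDerivAt (fun z => μ / 2 * ‖z‖ ^ 2) ((μ / 2) • 2 • innerSL ℝ x) x :=
    (hasStrictFDerivAt_norm_sq x).hasFDerivAt.const_mul (μ / 2)
  have h := (strongConvexOn_iff_convex.1 hf).add_fderiv_sub_le (hf'.sub hsq) y
  have hexpand : ‖y‖ ^ 2 = ‖x‖ ^ 2 + 2 * ⟪x, y - x⟫ + ‖y - x‖ ^ 2 := by
    rw [← norm_add_sq_real, add_sub_cancel]
  simp only [sub_apply, smul_apply, innerSL_apply_apply,
    smul_eq_mul, nsmul_eq_mul, Nat.cast_ofNat, hexpand] at h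
  linarith

end FirstOrder

theorem StrongConvexOn.le_div_of_armijo {E : Type*} [NormedAddCommGroup E]
    [InnerProductSpace ℝ E] [CompleteSpace E] {f : E → ℝ} {μ σ β : ℝ} {x d g : E}
    (hf : StrongConvexOn univ μ f) (hμ : 0 < μ) (hg : HasGradientAt f g x)
    (hgd : ⟪g, d⟫ = -‖d‖ ^ 2) (hd : d ≠ 0) (hβ : 0 < β)
    (harm : f (x + β • d) - f x ≤ σ * β * ⟪g, d⟫) :
    β ≤ 2 * (1 - σ) / μ := by
  have hlb := hf.add_fderiv_sub_add_le (hasGradientAt_iff_hasFDerivAt.1 hg) (x + β • d)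
  simp only [add_sub_cancel_left, InnerProductSpace.toDual_apply_apply, inner_smul_right,
    norm_smul, Real.norm_of_nonneg hβ.le, mul_pow, hgd] at hlb
  rw [hgd] at harm
  have hβd : 0 < β * ‖d‖ ^ 2 := by positivity
  rw [le_div_iff₀ hμ]
  nlinarith

theorem stmt_10_general {n m : ℕ} (F : Fin m → EuclideanSpace ℝ (Fin n) → ℝ)
    (mu : Fin m → ℝ) (hmu : ∀ i, 0 < mu i)
    (hsc : ∀ i, ConvexOn ℝ Set.univ (fun y : EuclideanSpace ℝ (Fin n) =>
      F i y - mu i / 2 * ‖y‖ ^ 2))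
    (x d : EuclideanSpace ℝ (Fin n)) (hd : d ≠ 0)
    (σ β : ℝ) (hβ0 : 0 < β) (hβ1 : β ≤ 1)
    (harm : ArmijoAt F x d σ β)
    (A : Finset (Fin m)) (hA : ∀ i, i ∈ A ↔ ⟪gradient (F i) x, d⟫ = -‖d‖ ^ 2)
    (hAne : A.Nonempty) :
    β ≤ min (2 * (1 - σ) / A.sup' hAne mu) 1 := by
  obtain ⟨i, hiA, hsup⟩ := A.exists_mem_eq_sup' hAne mu
  have hgd := (hA i).1 hiA
  -- `gradient` is junk `0` off differentiability points, which `hgd` excludes since `d ≠ 0`.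
  have hdiff : DifferentiableAt ℝ (F i) x := by
    by_contra h
    rw [gradient_eq_zero_of_not_differentiableAt h, inner_zero_left, eq_comm, neg_eq_zero,
      pow_eq_zero_iff two_ne_zero, norm_eq_zero] at hgd
    exact hd hgd
  rw [le_min_iff, hsup]
  exact ⟨(strongConvexOn_iff_convex.2 (hsc i)).le_div_of_armijo (hmu i) hdiff.hasGradientAt hgd hd
    hβ0 (harm i), hβ1⟩

theorem stmt_10 {n m : ℕ} (F : Fin m → EuclideanSpace ℝ (Fin n) → ℝ)
    (mu : Fin m → ℝ) (hmu : ∀ i, 0 < mu i)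
    (hsc : ∀ i, ConvexOn ℝ Set.univ (fun y : EuclideanSpace ℝ (Fin n) =>
      F i y - mu i / 2 * ‖y‖ ^ 2))
    (x d : EuclideanSpace ℝ (Fin n)) (hd : d ≠ 0)
    (σ β : ℝ) (hσ : σ ∈ Set.Ioo (0 : ℝ) 1) (hβ0 : 0 < β) (hβ1 : β ≤ 1)
    (harm : ArmijoAt F x d σ β)
    (A : Finset (Fin m)) (hA : ∀ i, i ∈ A ↔ ⟪gradient (F i) x, d⟫ = -‖d‖ ^ 2)
    (hAne : A.Nonempty) :
    β ≤ min (2 * (1 - σ) / A.sup' hAne mu) 1 :=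
  stmt_10_general F mu hmu hsc x d hd σ β hβ0 hβ1 harm A hA hAne
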